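/- (Ky Fan inequality for sums.) For compact operators K₁, K₂ on a Hilbert space and λ₁, λ₂ > 0, one has n(λ₁+λ₂, K₁+K₂) ≤ n(λ₁,K₁) + n(λ₂,K₂), where n(λ,K) is the number of singular values of K exceeding λ. -/

import Mathlib

open Filter Topology

variable {H : Type*} [NormedAddCommGroup H] [InnerProductSpace ℂ H] [CompleteSpace H]

/-- The `n`-th approximation number of a bounded operator `K`: the distance from
`K` to the operators of rank at most `n`.  For a compact operator this equals the
`(n+1)`-st singular value `s_{n+1}(K)`. -/
noncomputable def approxNum (K : H →L[ℂ] H) (n : ℕ) : ℝ :=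
  sInf {c : ℝ | ∃ F : H →L[ℂ] H, LinearMap.rank (F : H →ₗ[ℂ] H) ≤ (n : Cardinal) ∧ c = ‖K - F‖}

lemma approxNum_set_nonempty (K : H →L[ℂ] H) (n : ℕ) :
    {c : ℝ | ∃ F : H →L[ℂ] H, LinearMap.rank (F : H →ₗ[ℂ] H) ≤ (n : Cardinal) ∧ c = ‖K - F‖}.Nonempty :=
  ⟨‖K - 0‖, 0, by simp [LinearMap.rank_zero], rfl⟩

lemma approxNum_set_bddBelow (K : H →L[ℂ] H) (n : ℕ) :
    BddBelow {c : ℝ | ∃ F : H →L[ℂ] H, LinearMap.rank (F : H →ₗ[ℂ] H) ≤ (n : Cardinal) ∧ c = ‖K - F‖} := by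
  refine ⟨0, ?_⟩
  rintro c ⟨F, hF, rfl⟩
  exact norm_nonneg _

lemma approxNum_le (K F : H →L[ℂ] H) (n : ℕ)
    (hF : LinearMap.rank (F : H →ₗ[ℂ] H) ≤ (n : Cardinal)) :
    approxNum K n ≤ ‖K - F‖ :=
  csInf_le (approxNum_set_bddBelow K n) ⟨F, hF, rfl⟩

/-- Subadditivity of approximation numbers. -/
lemma approxNum_add_le (K₁ K₂ : H →L[ℂ] H) (m n : ℕ) :
    approxNum (K₁ + K₂) (m + n) ≤ approxNum K₁ m + approxNum K₂ n := by
  have key : ∀ a ∈ {c : ℝ | ∃ F : H →L[ℂ] H, LinearMap.rank (F : H →ₗ[ℂ] H) ≤ (m : Cardinal) ∧ c = ‖K₁ - F‖},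
      ∀ b ∈ {c : ℝ | ∃ F : H →L[ℂ] H, LinearMap.rank (F : H →ₗ[ℂ] H) ≤ (n : Cardinal) ∧ c = ‖K₂ - F‖},
      approxNum (K₁ + K₂) (m + n) ≤ a + b := by
    rintro a ⟨F₁, hF₁, rfl⟩ b ⟨F₂, hF₂, rfl⟩
    have hrank : LinearMap.rank ((F₁ + F₂ : H →L[ℂ] H) : H →ₗ[ℂ] H) ≤ ((m + n : ℕ) : Cardinal) := by
      calc LinearMap.rank ((F₁ + F₂ : H →L[ℂ] H) : H →ₗ[ℂ] H)
          ≤ LinearMap.rank (F₁ : H →ₗ[ℂ] H) + LinearMap.rank (F₂ : H →ₗ[ℂ] H) :=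
            LinearMap.rank_add_le _ _
        _ ≤ (m : Cardinal) + (n : Cardinal) := add_le_add hF₁ hF₂
        _ = ((m + n : ℕ) : Cardinal) := by push_cast; ring
    calc approxNum (K₁ + K₂) (m + n) ≤ ‖(K₁ + K₂) - (F₁ + F₂)‖ := approxNum_le _ _ _ hrank
      _ = ‖(K₁ - F₁) + (K₂ - F₂)‖ := by congr 1; abel
      _ ≤ ‖K₁ - F₁‖ + ‖K₂ - F₂‖ := norm_add_le _ _
  rw [show approxNum K₁ m + approxNum K₂ n = approxNum K₁ m + approxNum K₂ n from rfl]
  have h1 : approxNum (K₁ + K₂) (m + n) - approxNum K₂ n ≤ approxNum K₁ m := by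
    apply le_csInf (approxNum_set_nonempty K₁ m)
    intro a ha
    rw [sub_le_iff_le_add]
    have h2 : approxNum (K₁ + K₂) (m + n) - a ≤ approxNum K₂ n := by
      apply le_csInf (approxNum_set_nonempty K₂ n)
      intro b hb
      rw [sub_le_iff_le_add]
      calc approxNum (K₁ + K₂) (m + n) ≤ a + b := key a ha b hb
        _ = b + a := add_comm _ _
    linarith
  linarith

/-- A compact operator can be approximated by finite-rank operators. -/
lemma exists_approxNum_le (K : H →L[ℂ] H) (hK : IsCompactOperator K) {ε : ℝ} (hε : 0 < ε) :
    ∃ n : ℕ, approxNum K n ≤ ε := by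
  have hcpt : IsCompact (closure (K '' Metric.closedBall 0 1)) :=
    hK.isCompact_closure_image_closedBall (𝕜₁ := ℂ) 1
  obtain ⟨t, htf, hcov⟩ := (Metric.totallyBounded_iff.mp hcpt.totallyBounded) ε hε
  set S : Submodule ℂ H := Submodule.span ℂ t with hS
  haveI : FiniteDimensional ℂ S := FiniteDimensional.span_of_finite ℂ htf
  set F : H →L[ℂ] H := S.subtypeL.comp (S.orthogonalProjectionOnto.comp K) with hFdef
  refine ⟨Module.finrank ℂ S, ?_⟩
  have hrank : LinearMap.rank (F : H →ₗ[ℂ] H) ≤ (Module.finrank ℂ S : Cardinal) := by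
    have hr : LinearMap.range (F : H →ₗ[ℂ] H) ≤ S := by
      rintro x ⟨y, rfl⟩
      exact (S.orthogonalProjectionOnto (K y)).2
    calc LinearMap.rank (F : H →ₗ[ℂ] H) = Module.rank ℂ (LinearMap.range (F : H →ₗ[ℂ] H)) := rfl
      _ ≤ Module.rank ℂ S := Submodule.rank_mono hr
      _ = (Module.finrank ℂ S : Cardinal) := (Module.finrank_eq_rank ℂ S).symm
  refine le_trans (approxNum_le K F _ hrank) ?_
  -- show ‖K - F‖ ≤ ε
  apply ContinuousLinearMap.opNorm_le_bound _ hε.le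
  intro x
  rcases eq_or_ne x 0 with rfl | hx
  · simp
  · have hxn : (0:ℝ) < ‖x‖ := norm_pos_iff.mpr hx
    set u : H := (‖x‖⁻¹ : ℂ) • x with hu
    have hun : ‖u‖ = 1 := by
      rw [hu, norm_smul]
      simp [hxn.ne', norm_inv]
    have hxu : x = (‖x‖ : ℂ) • u := by
      rw [hu, smul_smul]
      rw [mul_inv_cancel₀ (by exact_mod_cast hxn.ne')]
      simp
    have hmem : K u ∈ K '' Metric.closedBall 0 1 :=
      ⟨u, by simp [Metric.mem_closedBall, hun], rfl⟩
    have hmem' : K u ∈ ⋃ y ∈ t, Metric.ball y ε := hcov (subset_closure hmem)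
    obtain ⟨y, hyt, hy⟩ := Set.mem_iUnion₂.mp hmem'
    have hyS : y ∈ S := Submodule.subset_span hyt
    have hproj : ‖K u - S.orthogonalProjectionOnto (K u)‖ ≤ ‖K u - y‖ := by
      rw [← Submodule.starProjection_apply, Submodule.starProjection_minimal]
      exact ciInf_le ⟨0, by rintro c ⟨v, rfl⟩; exact norm_nonneg _⟩ (⟨y, hyS⟩ : S)
    have hKFu : ‖(K - F) u‖ ≤ ε := by
      have : (K - F) u = K u - S.orthogonalProjectionOnto (K u) := by
        simp [hFdef]
      rw [this]
      exact hproj.trans (le_of_lt (by simpa [dist_eq_norm] using hy))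
    calc ‖(K - F) x‖ = ‖(K - F) ((‖x‖ : ℂ) • u)‖ := by rw [← hxu]
      _ = ‖x‖ * ‖(K - F) u‖ := by
          rw [map_smul, norm_smul]
          simp
      _ ≤ ‖x‖ * ε := by
          exact mul_le_mul_of_nonneg_left hKFu hxn.le
      _ = ε * ‖x‖ := mul_comm _ _

/-- The singular value counting function `n(λ, K)`: the number of singular values
of `K` exceeding `λ`. -/
noncomputable def svCount (K : H →L[ℂ] H) (lam : ℝ) : ℕ :=
  sInf {n : ℕ | approxNum K n ≤ lam}

/-- Ky Fan inequality for sums: `n(λ₁+λ₂, K₁+K₂) ≤ n(λ₁,K₁) + n(λ₂,K₂)`. -/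
theorem kyFan_sum (K₁ K₂ : H →L[ℂ] H)
    (hK₁ : IsCompactOperator K₁) (hK₂ : IsCompactOperator K₂)
    (lam₁ lam₂ : ℝ) (h₁ : 0 < lam₁) (h₂ : 0 < lam₂) :
    svCount (K₁ + K₂) (lam₁ + lam₂) ≤ svCount K₁ lam₁ + svCount K₂ lam₂ := by
  have hne₁ : {n : ℕ | approxNum K₁ n ≤ lam₁}.Nonempty := exists_approxNum_le K₁ hK₁ h₁
  have hne₂ : {n : ℕ | approxNum K₂ n ≤ lam₂}.Nonempty := exists_approxNum_le K₂ hK₂ h₂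
  have hm : approxNum K₁ (svCount K₁ lam₁) ≤ lam₁ := Nat.sInf_mem hne₁
  have hn : approxNum K₂ (svCount K₂ lam₂) ≤ lam₂ := Nat.sInf_mem hne₂
  apply Nat.sInf_le
  exact le_trans (approxNum_add_le K₁ K₂ _ _) (add_le_add hm hn)
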